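/- arXiv:0910.0793 — 2 statements merged into one kernel-verified Lean document; each statement's English description precedes it below -/
import Mathlib

section
/- Let σ ⊂ ℝ^n be a reflexive Gorenstein cone of index r with respect to the lattice ℤ^n, with distinguished lattice points n_σ (in the dual lattice) and m_{σ∨} (in ℤ^n), and let σ_{(r)} = {x ∈ σ : ⟨x, n_σ⟩ = r} and σ∨_{(1)} = {y ∈ σ∨ : ⟨m_{σ∨}, y⟩ = 1}. Regard P := σ_{(r)} − m_{σ∨} as a reflexive polytope in the hyperplane n_σ^⊥ with lattice ℤ^n ∩ n_σ^⊥, whose dual lattice is ℤ^n/ℤ·n_σ, and let π : ℝ^n → ℝ^n/ℝ·n_σ be the quotient map. Then the dual reflexive polytope P* = {ȳ ∈ ℝ^n/ℝ·n_σ : ⟨x, ȳ⟩ ≥ −1 for all x ∈ P} equals π(σ∨_{(1)}). -/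
/-!
Write `σ = ℝ≥0 · conv S` and `σ∨ = ℝ≥0 · conv T` with `⟨S, n_σ⟩ = 1` and `⟨T, m_{σ∨}⟩ = 1`.
Then `r = ⟨m_{σ∨}, n_σ⟩ > 0`: `n_σ ∈ σ∨`, and the only point of `σ∨` on which `m_{σ∨}` vanishes
is `0`. Hence every class in `ℝ^n/ℝ·n_σ` has exactly one representative `y` with
`⟨m_{σ∨}, y⟩ = 1`, and since `P ⊥ n_σ` we may pair `P` with that `y`. For `x ∈ σ_{(r)}` we get
`⟨x - m_{σ∨}, y⟩ = ⟨x, y⟩ - 1`, so `π y ∈ P*` iff `y ≥ 0` on `σ_{(r)}`, i.e. iff `y ∈ σ∨`,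
because `σ_{(r)}` generates `σ`.
-/

open scoped Pointwise
open Set

noncomputable section

/-- The standard pairing on `ℝ^n`. -/
def pairing {n : ℕ} (x y : Fin n → ℝ) : ℝ := ∑ i, x i * y i

/-- A point of `ℝ^n` lying in the lattice `ℤ^n`. -/
def IsLatticePt {n : ℕ} (x : Fin n → ℝ) : Prop := ∀ i, ∃ z : ℤ, x i = (z : ℝ)

/-- A lattice polytope: the convex hull of finitely many lattice points. -/
def IsLatticePolytope {n : ℕ} (P : Set (Fin n → ℝ)) : Prop :=
  ∃ S : Set (Fin n → ℝ), S.Finite ∧ (∀ x ∈ S, IsLatticePt x) ∧ P = convexHull ℝ S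

/-- The dual polytope `P* = {y | ⟨x,y⟩ ≥ -1 ∀ x ∈ P}`. -/
def polarDual {n : ℕ} (P : Set (Fin n → ℝ)) : Set (Fin n → ℝ) :=
  {y | ∀ x ∈ P, -1 ≤ pairing x y}

/-- A reflexive polytope. -/
def IsReflexive {n : ℕ} (P : Set (Fin n → ℝ)) : Prop :=
  IsLatticePolytope P ∧ (0 : Fin n → ℝ) ∈ interior P ∧ IsLatticePolytope (polarDual P)

/-- `min⟨P, u⟩ = min_{x ∈ P} ⟨x, u⟩`. -/
def minPair {n : ℕ} (P : Set (Fin n → ℝ)) (u : Fin n → ℝ) : ℝ :=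
  sInf ((fun x => pairing x u) '' P)

/-- The real vector space `ℝ^d ⊕ ℝ^k`. -/
abbrev Vdk (d k : ℕ) := (Fin d → ℝ) × (Fin k → ℝ)

/-- The pairing on `ℝ^d ⊕ ℝ^k` (sum of the two standard pairings). -/
def pairingV {d k : ℕ} (x y : Vdk d k) : ℝ := pairing x.1 y.1 + pairing x.2 y.2

def IsLatticePtV {d k : ℕ} (x : Vdk d k) : Prop := IsLatticePt x.1 ∧ IsLatticePt x.2

def IsLatticePolytopeV {d k : ℕ} (P : Set (Vdk d k)) : Prop :=
  ∃ S : Set (Vdk d k), S.Finite ∧ (∀ x ∈ S, IsLatticePtV x) ∧ P = convexHull ℝ S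

def polarDualV {d k : ℕ} (P : Set (Vdk d k)) : Set (Vdk d k) :=
  {y | ∀ x ∈ P, -1 ≤ pairingV x y}

def IsReflexiveV {d k : ℕ} (P : Set (Vdk d k)) : Prop :=
  IsLatticePolytopeV P ∧ (0 : Vdk d k) ∈ interior P ∧ IsLatticePolytopeV (polarDualV P)

/-- The Cayley cone `σ̄ = {(t₀Δ₀ + ⋯ + t_kΔ_k, t₀, …, t_k) : tᵢ ≥ 0} ⊆ ℝ^d ⊕ ℝ^{k+1}`. -/
def cayleyCone {d k : ℕ} (Δ : Fin (k+1) → Set (Fin d → ℝ)) : Set (Vdk d (k+1)) :=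
  {p | (∀ i, 0 ≤ p.2 i) ∧ p.1 ∈ ∑ i, p.2 i • Δ i}

/-- The dual cone of a cone in `ℝ^d ⊕ ℝ^k`. -/
def dualConeV {d k : ℕ} (σ : Set (Vdk d k)) : Set (Vdk d k) :=
  {y | ∀ x ∈ σ, 0 ≤ pairingV x y}

/-- A (full-dimensional) Gorenstein cone with respect to `ℤ^n`, with distinguished dual
lattice point `nσ`: the cone is generated by finitely many lattice points lying on the
affine hyperplane `{x : ⟨x, nσ⟩ = 1}`. -/
def IsGorensteinCone {n : ℕ} (σ : Set (Fin n → ℝ)) (nσ : Fin n → ℝ) : Prop :=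
  Submodule.span ℝ σ = ⊤ ∧ IsLatticePt nσ ∧
    ∃ S : Set (Fin n → ℝ), S.Finite ∧ (∀ x ∈ S, IsLatticePt x ∧ pairing x nσ = 1) ∧
      σ = {z | ∃ t : ℝ, 0 ≤ t ∧ ∃ x ∈ convexHull ℝ S, z = t • x}

/-- The dual cone of `σ ⊆ ℝ^n`. -/
def dualCone {n : ℕ} (σ : Set (Fin n → ℝ)) : Set (Fin n → ℝ) :=
  {y | ∀ x ∈ σ, 0 ≤ pairing x y}

section GorensteinSlice

variable {n : ℕ}

theorem pairing_eq_dotProduct (x y : Fin n → ℝ) : pairing x y = x ⬝ᵥ y := rfl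

theorem pairing_smul_left (t : ℝ) (x y : Fin n → ℝ) : pairing (t • x) y = t * pairing x y :=
  smul_dotProduct t x y

def coneOver (S : Set (Fin n → ℝ)) : Set (Fin n → ℝ) :=
  {z | ∃ t : ℝ, 0 ≤ t ∧ ∃ x ∈ convexHull ℝ S, z = t • x}

theorem dualCone_empty : dualCone (∅ : Set (Fin n → ℝ)) = univ :=
  eq_univ_of_forall fun _ _ h => h.elim

theorem pairing_eq_of_mem_convexHull {S : Set (Fin n → ℝ)} {m : Fin n → ℝ} {a : ℝ}
    (hS : ∀ x ∈ S, pairing x m = a) {c : Fin n → ℝ} (hc : c ∈ convexHull ℝ S) :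
    pairing c m = a :=
  convexHull_min hS
    (convex_hyperplane ⟨fun x y => add_dotProduct x y m, fun t x => smul_dotProduct t x m⟩ a) hc

section ConeOver

variable {S : Set (Fin n → ℝ)} {m x : Fin n → ℝ}

theorem pairing_nonneg_of_mem_coneOver (hS : ∀ x ∈ S, pairing x m = 1)
    (hx : x ∈ coneOver S) : 0 ≤ pairing x m := by
  obtain ⟨t, ht, c, hc, rfl⟩ := hx
  rwa [pairing_smul_left, pairing_eq_of_mem_convexHull hS hc, mul_one]

theorem eq_zero_of_mem_coneOver_of_pairing_eq_zero (hS : ∀ x ∈ S, pairing x m = 1)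
    (hx : x ∈ coneOver S) (h0 : pairing x m = 0) : x = 0 := by
  obtain ⟨t, -, c, hc, rfl⟩ := hx
  rw [pairing_smul_left, pairing_eq_of_mem_convexHull hS hc, mul_one] at h0
  rw [h0, zero_smul]

theorem ne_zero_of_coneOver_nonempty (hS : ∀ x ∈ S, pairing x m = 1)
    (hne : (coneOver S).Nonempty) : m ≠ 0 := by
  rintro rfl
  obtain ⟨-, -, -, c, hc, -⟩ := hne
  have := pairing_eq_of_mem_convexHull hS hc
  rw [pairing_eq_dotProduct, dotProduct_zero] at this
  exact zero_ne_one this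

theorem coneOver_ne_univ (hS : ∀ x ∈ S, pairing x m = 1) : coneOver S ≠ univ := by
  intro huniv
  obtain ⟨-, -, c, hc, -⟩ : (0 : Fin n → ℝ) ∈ coneOver S := huniv ▸ mem_univ _
  have hneg := pairing_nonneg_of_mem_coneOver hS (huniv ▸ mem_univ (-c))
  rw [pairing_eq_dotProduct, neg_dotProduct, ← pairing_eq_dotProduct,
    pairing_eq_of_mem_convexHull hS hc] at hneg
  linarith

theorem mem_dualCone_coneOver (hS : ∀ x ∈ S, pairing x m = 1) : m ∈ dualCone (coneOver S) :=
  fun _ hx => pairing_nonneg_of_mem_coneOver hS hx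

theorem mem_dualCone_coneOver_iff (hS : ∀ x ∈ S, pairing x m = 1) {r : ℝ} (hr : 0 < r)
    {y : Fin n → ℝ} :
    y ∈ dualCone (coneOver S) ↔ ∀ x ∈ coneOver S, pairing x m = r → 0 ≤ pairing x y := by
  refine ⟨fun hy x hx _ => hy x hx, fun hy x hx => ?_⟩
  obtain ⟨t, ht, c, hc, rfl⟩ := hx
  have hrc := hy (r • c) ⟨r, hr.le, c, hc, rfl⟩
    (by rw [pairing_smul_left, pairing_eq_of_mem_convexHull hS hc, mul_one])
  rw [pairing_smul_left] at hrc ⊢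
  exact mul_nonneg ht (nonneg_of_mul_nonneg_right hrc hr)

end ConeOver

theorem pairing_pos_of_dualCone_coneOver_eq {S T : Set (Fin n → ℝ)} {m v : Fin n → ℝ}
    (hS : ∀ x ∈ S, pairing x v = 1) (hT : ∀ x ∈ T, pairing x m = 1)
    (hST : dualCone (coneOver S) = coneOver T) : 0 < pairing m v := by
  have hne : (coneOver S).Nonempty := by
    by_contra hempty
    rw [not_nonempty_iff_eq_empty.mp hempty, dualCone_empty] at hST
    exact coneOver_ne_univ hT hST.symm
  have hv : v ∈ coneOver T := hST ▸ mem_dualCone_coneOver hS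
  rw [pairing_eq_dotProduct, dotProduct_comm, ← pairing_eq_dotProduct]
  exact (pairing_nonneg_of_mem_coneOver hT hv).lt_of_ne fun h0 =>
    ne_zero_of_coneOver_nonempty hS hne (eq_zero_of_mem_coneOver_of_pairing_eq_zero hT hv h0.symm)

section Quotient

variable {v y y' : Fin n → ℝ}

theorem mk_eq_mk_iff_exists_eq_add_smul :
    (Submodule.Quotient.mk y : (Fin n → ℝ) ⧸ Submodule.span ℝ {v}) = Submodule.Quotient.mk y' ↔
      ∃ a : ℝ, y = y' + a • v := by
  rw [Submodule.Quotient.eq, Submodule.mem_span_singleton]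
  exact exists_congr fun a => by rw [eq_sub_iff_add_eq, add_comm, eq_comm]

theorem pairing_eq_of_mk_eq_mk {x : Fin n → ℝ} (hx : pairing x v = 0)
    (h : (Submodule.Quotient.mk y : (Fin n → ℝ) ⧸ Submodule.span ℝ {v}) =
      Submodule.Quotient.mk y') :
    pairing x y = pairing x y' := by
  obtain ⟨a, rfl⟩ := mk_eq_mk_iff_exists_eq_add_smul.mp h
  simp only [pairing_eq_dotProduct] at hx ⊢
  rw [dotProduct_add, dotProduct_smul, hx, smul_zero, add_zero]

variable {m : Fin n → ℝ}

theorem exists_mk_eq_mk_and_pairing_eq (hmv : pairing m v ≠ 0) (y₀ : Fin n → ℝ) (b : ℝ) :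
    ∃ y, (Submodule.Quotient.mk y : (Fin n → ℝ) ⧸ Submodule.span ℝ {v}) =
      Submodule.Quotient.mk y₀ ∧ pairing m y = b := by
  refine ⟨y₀ + ((b - pairing m y₀) / pairing m v) • v,
    mk_eq_mk_iff_exists_eq_add_smul.mpr ⟨_, rfl⟩, ?_⟩
  simp only [pairing_eq_dotProduct] at hmv ⊢
  rw [dotProduct_add, dotProduct_smul, smul_eq_mul, div_mul_cancel₀ _ hmv]
  ring

theorem eq_of_mk_eq_mk_of_pairing_eq (hmv : pairing m v ≠ 0)
    (h : (Submodule.Quotient.mk y : (Fin n → ℝ) ⧸ Submodule.span ℝ {v}) =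
      Submodule.Quotient.mk y')
    (hm : pairing m y = pairing m y') : y = y' := by
  obtain ⟨a, rfl⟩ := mk_eq_mk_iff_exists_eq_add_smul.mp h
  simp only [pairing_eq_dotProduct] at hmv hm
  rw [dotProduct_add, dotProduct_smul, smul_eq_mul, add_eq_left, mul_eq_zero] at hm
  rw [hm.resolve_right hmv, zero_smul, add_zero]

theorem mk_mem_mkQ_image_iff (hmv : pairing m v ≠ 0) {C : Set (Fin n → ℝ)} {b : ℝ}
    (hmy : pairing m y = b) :
    (Submodule.span ℝ {v}).mkQ y ∈ (Submodule.span ℝ {v}).mkQ '' {y ∈ C | pairing m y = b} ↔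
      y ∈ C := by
  refine ⟨?_, fun hy => ⟨y, ⟨hy, hmy⟩, rfl⟩⟩
  rintro ⟨y', ⟨hy', hmy'⟩, h⟩
  rwa [← eq_of_mk_eq_mk_of_pairing_eq hmv h (hmy'.trans hmy.symm)]

end Quotient

end GorensteinSlice

/-- for a reflexive Gorenstein cone `σ` of index `r`, the dual of the
reflexive polytope `P = σ_{(r)} − m_{σ∨}` (taken in the quotient `ℝ^n/ℝ·n_σ` via the
induced pairing) equals `π(σ∨_{(1)})`. -/
theorem dual_of_gorenstein_slice {n : ℕ}
    (σ : Set (Fin n → ℝ)) (nσ mσ : Fin n → ℝ) (r : ℝ)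
    (hσ : IsGorensteinCone σ nσ)
    (hσv : IsGorensteinCone (dualCone σ) mσ)
    (hr : r = pairing mσ nσ)
    -- P = σ_{(r)} − m_{σ∨}
    (P : Set (Fin n → ℝ))
    (hP : P = (fun x => x - mσ) '' {x ∈ σ | pairing x nσ = r}) :
    -- P* = π(σ∨_{(1)}) in ℝ^n/ℝ·n_σ
    {yq : (Fin n → ℝ) ⧸ (Submodule.span ℝ {nσ}) |
        ∀ x ∈ P, ∀ y : Fin n → ℝ, Submodule.Quotient.mk y = yq → -1 ≤ pairing x y} =
      (Submodule.span ℝ {nσ}).mkQ '' {y ∈ dualCone σ | pairing mσ y = 1} := by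
  obtain ⟨-, -, S, -, hS, hσS⟩ := hσ
  replace hσS : σ = coneOver S := hσS
  subst hσS
  obtain ⟨-, -, T, -, hT, hST⟩ := hσv
  replace hS : ∀ x ∈ S, pairing x nσ = 1 := fun x hx => (hS x hx).2
  have hr_pos : 0 < r := hr ▸ pairing_pos_of_dualCone_coneOver_eq hS (fun x hx => (hT x hx).2) hST
  have hmn : pairing mσ nσ ≠ 0 := hr ▸ hr_pos.ne'
  subst hP
  ext yq
  obtain ⟨y₀, rfl⟩ := Submodule.Quotient.mk_surjective _ yq
  obtain ⟨y, hy, hmy⟩ := exists_mk_eq_mk_and_pairing_eq hmn y₀ 1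
  rw [← hy, ← Submodule.mkQ_apply, mk_mem_mkQ_image_iff hmn hmy, Submodule.mkQ_apply,
    mem_dualCone_coneOver_iff hS hr_pos]
  have hshift (x : Fin n → ℝ) (w : Fin n → ℝ) : pairing (x - mσ) w = pairing x w - pairing mσ w :=
    sub_dotProduct x mσ w
  simp only [mem_ofPred_eq, forall_mem_image, and_imp]
  refine forall₂_congr fun x _ => forall_congr' fun hx => ⟨fun h => ?_, fun h y' hy' => ?_⟩
  · linarith [hshift x y ▸ h y rfl]
  · have hperp : pairing (x - mσ) nσ = 0 := by rw [hshift, hx, hr, sub_self]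
    rw [pairing_eq_of_mk_eq_mk hperp hy', hshift]
    linarith
end
end

section
/- Let Δ = Δ_0 + Δ_1 + ⋯ + Δ_k be a Minkowski sum decomposition of a reflexive polytope Δ ⊂ ℝ^d into lattice polytopes, σ̄ ⊂ ℝ^d ⊕ ℝ^{k+1} the Cayley cone, n_σ̄ = r_0* + ⋯ + r_k* and m_{σ̄∨} = r_0 + ⋯ + r_k. Then: (i) the linear map from the hyperplane n_σ̄^⊥ ⊂ ℝ^d ⊕ ℝ^{k+1} to ℝ^d ⊕ ℝ^k sending (m, α_0, …, α_k) to (m, α_1, …, α_k) maps σ̄_{(k+1)} − m_{σ̄∨} bijectively onto (k+1)·Conv(Δ_0, Δ_1 + e_1, …, Δ_k + e_k) − (e_1 + ⋯ + e_k), where σ̄_{(k+1)} = {x ∈ σ̄ : ⟨x, n_σ̄⟩ = k+1}; and (ii) the linear map π : ℝ^d ⊕ ℝ^{k+1} → ℝ^d ⊕ ℝ^k sending (m, α_0, …, α_k) to (m, α_1 − α_0, …, α_k − α_0) satisfies π(σ̄_{(1)}) = Conv(Δ_0 − (e_1 + ⋯ + e_k), Δ_1 + e_1, …, Δ_k + e_k),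 where σ̄_{(1)} = {x ∈ σ̄ : ⟨x, n_σ̄⟩ = 1}. -/
open scoped Pointwise
open Set

noncomputable section

/-!
A point of the slice `σ̄_{(s)}` is `(∑ tᵢ xᵢ, t)` with `xᵢ ∈ Δᵢ`, `tᵢ ≥ 0`, `∑ tᵢ = s`; since the
cone is closed under positive scaling, `σ̄_{(k+1)} = (k+1) • σ̄_{(1)}`. For convex nonempty `Δᵢ`
and heights `wᵢ`, the convex hull of `⋃ Δᵢ × {wᵢ}` is exactly the set of points
`(∑ tᵢ xᵢ, ∑ tᵢ wᵢ)` with `t` in the standard simplex. With `w₀ = v`, `w_{i+1} = e_{i+1}` this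
says that `(m, α) ↦ (m, α₀ v + (α₁, …, α_k))` maps `σ̄_{(1)}` onto `Conv(Δ₀ × {v}, Δᵢ + eᵢ)`;
`v = 0` gives (i) and `v = -(e₁ + ⋯ + e_k)` gives (ii). The map in (i) is injective on
`σ̄_{(k+1)} - m_{σ̄∨}` because there `∑ αᵢ = 0`, so `α₀` is determined by `α₁, …, α_k`.
-/

theorem Set.finsetSum_prod {ι α β : Type*} [AddCommMonoid α] [AddCommMonoid β] (s : Finset ι)
    (S : ι → Set α) (T : ι → Set β) :
    ∑ i ∈ s, S i ×ˢ T i = (∑ i ∈ s, S i) ×ˢ (∑ i ∈ s, T i) := by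
  classical
  induction s using Finset.induction_on with
  | empty => simp
  | insert i s hi ih => simp only [Finset.sum_insert hi, ih, prod_add_prod_comm]

section ConvexHullUnion

variable {ι E F : Type*} [Fintype ι] [AddCommGroup E] [Module ℝ E] [AddCommGroup F] [Module ℝ F]

theorem convexHull_iUnion_eq_biUnion_sum_smul {A : ι → Set E} (hconv : ∀ i, Convex ℝ (A i))
    (hne : ∀ i, (A i).Nonempty) :
    convexHull ℝ (⋃ i, A i) = ⋃ t ∈ stdSimplex ℝ ι, ∑ i, t i • A i := by
  classical
  refine (convexHull_min ?_ ?_).antisymm ?_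
  · refine iUnion_subset fun j x hx => mem_biUnion (single_mem_stdSimplex ℝ j) ?_
    rw [Finset.sum_eq_single j (fun i _ hij => by simp [hij, hne i]) (by simp)]
    simpa using hx
  · rintro _ hx _ hy a b ha hb hab
    obtain ⟨t, ht, hx⟩ := mem_iUnion₂.mp hx
    obtain ⟨s, hs, hy⟩ := mem_iUnion₂.mp hy
    refine mem_biUnion (convex_stdSimplex ℝ ι ht hs ha hb hab) ?_
    have hsplit : ∑ i, (a • t + b • s) i • A i = a • ∑ i, t i • A i + b • ∑ i, s i • A i := by
      simp only [Finset.smul_sum, smul_smul, ← Finset.sum_add_distrib, Pi.add_apply,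
        Pi.smul_apply, smul_eq_mul]
      exact Finset.sum_congr rfl fun i _ =>
        (hconv i).add_smul (mul_nonneg ha (ht.1 i)) (mul_nonneg hb (hs.1 i))
    rw [hsplit]
    exact add_mem_add (smul_mem_smul_set hx) (smul_mem_smul_set hy)
  · refine iUnion₂_subset fun t ht x hx => ?_
    obtain ⟨a, ha, rfl⟩ := (mem_fintype_sum _ x).mp hx
    choose y hy hay using fun i => mem_smul_set.mp (ha i)
    simp only [← hay]
    exact (convex_convexHull ℝ _).sum_mem (fun i _ => ht.1 i) ht.2
      fun i _ => subset_convexHull ℝ _ (mem_iUnion_of_mem i (hy i))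

theorem convexHull_iUnion_image_prodMk {Δ : ι → Set E} (hconv : ∀ i, Convex ℝ (Δ i))
    (hne : ∀ i, (Δ i).Nonempty) (w : ι → F) :
    convexHull ℝ (⋃ i, (fun x => (x, w i)) '' Δ i) =
      {p | ∃ t ∈ stdSimplex ℝ ι, p.1 ∈ ∑ i, t i • Δ i ∧ p.2 = ∑ i, t i • w i} := by
  simp only [← prod_singleton]
  rw [convexHull_iUnion_eq_biUnion_sum_smul (fun i => (hconv i).prod (convex_singleton _))
    (fun i => (hne i).prod (singleton_nonempty _))]
  ext p
  simp only [mem_iUnion₂, smul_set_prod, smul_set_singleton, finsetSum_prod, finsetSum_singleton,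
    mem_prod, mem_singleton_iff, mem_ofPred_eq, exists_prop]

end ConvexHullUnion

theorem Fin.eq_of_sum_eq_of_tail_eq {M : Type*} [AddCommGroup M] {n : ℕ} {a b : Fin (n + 1) → M}
    (hsum : ∑ i, a i = ∑ i, b i) (htail : Fin.tail a = Fin.tail b) : a = b := by
  have hsucc : ∀ i : Fin n, a i.succ = b i.succ := congrFun htail
  have hzero : a 0 = b 0 := by
    simpa [Fin.sum_univ_succ, hsucc] using hsum
  exact funext fun i => Fin.cases hzero hsucc i

theorem Fin.union_iUnion_succ {α : Type*} {n : ℕ} (s : Fin (n + 1) → Set α) :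
    s 0 ∪ ⋃ i : Fin n, s i.succ = ⋃ i, s i := by
  ext x
  simp [Fin.exists_fin_succ]

theorem Set.Nonempty.of_fintype_sum {ι α : Type*} [Fintype ι] [AddCommMonoid α] {s : ι → Set α}
    (h : (∑ i, s i).Nonempty) (i : ι) : (s i).Nonempty := by
  obtain ⟨x, hx⟩ := h
  obtain ⟨a, ha, -⟩ := (mem_fintype_sum s x).mp hx
  exact ⟨a i, ha i⟩

theorem IsLatticePolytope.convex {n : ℕ} {P : Set (Fin n → ℝ)} (h : IsLatticePolytope P) :
    Convex ℝ P := by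
  obtain ⟨S, -, -, rfl⟩ := h
  exact convex_convexHull ℝ S

section Cayley

variable {d k : ℕ} {Δ : Fin (k + 1) → Set (Fin d → ℝ)}

def cayleySlice (Δ : Fin (k + 1) → Set (Fin d → ℝ)) (s : ℝ) : Set (Vdk d (k + 1)) :=
  {x ∈ cayleyCone Δ | pairingV x ((0 : Fin d → ℝ), fun _ => 1) = s}

theorem mem_cayleySlice {s : ℝ} {p : Vdk d (k + 1)} :
    p ∈ cayleySlice Δ s ↔ p ∈ cayleyCone Δ ∧ ∑ i, p.2 i = s := by
  simp [cayleySlice, pairingV, pairing]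

theorem smul_mem_cayleyCone {c : ℝ} (hc : 0 ≤ c) {p : Vdk d (k + 1)} (hp : p ∈ cayleyCone Δ) :
    c • p ∈ cayleyCone Δ := by
  refine ⟨fun i => mul_nonneg hc (hp.1 i), ?_⟩
  have h := smul_mem_smul_set (a := c) hp.2
  rwa [Finset.smul_sum, Finset.sum_congr rfl fun i _ => smul_smul c (p.2 i) (Δ i)] at h

theorem cayleySlice_mul {c : ℝ} (hc : 0 < c) (s : ℝ) :
    cayleySlice Δ (c * s) = c • cayleySlice Δ s := by
  ext p
  rw [mem_smul_set_iff_inv_smul_mem₀ hc.ne', mem_cayleySlice, mem_cayleySlice]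
  refine ⟨fun ⟨hp, hsum⟩ => ⟨smul_mem_cayleyCone (inv_nonneg.mpr hc.le) hp, ?_⟩,
    fun ⟨hp, hsum⟩ => ⟨?_, ?_⟩⟩
  · simp [← Finset.mul_sum, hsum, hc.ne']
  · simpa [smul_smul, hc.ne'] using smul_mem_cayleyCone hc.le hp
  · simp [← hsum, Finset.mul_sum, hc.ne']

def cayleyHeights (v : Fin k → ℝ) : Fin (k + 1) → Fin k → ℝ :=
  Fin.cons v fun i => Pi.single i 1

theorem sum_smul_cayleyHeights (t : Fin (k + 1) → ℝ) (v : Fin k → ℝ) :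
    ∑ i, t i • cayleyHeights v i = t 0 • v + Fin.tail t := by
  ext j
  simp [Fin.sum_univ_succ, cayleyHeights, Fin.tail, Pi.single_apply]

theorem union_image_eq_iUnion_image_cayleyHeights (v : Fin k → ℝ) :
    (fun x => ((x, v) : Vdk d k)) '' Δ 0 ∪
        ⋃ i : Fin k, (fun x => ((x, Pi.single i 1) : Vdk d k)) '' Δ i.succ =
      ⋃ i, (fun x => ((x, cayleyHeights v i) : Vdk d k)) '' Δ i :=
  Fin.union_iUnion_succ fun i => (fun x => ((x, cayleyHeights v i) : Vdk d k)) '' Δ i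

theorem image_cayleySlice_one (hconv : ∀ i, Convex ℝ (Δ i)) (hne : ∀ i, (Δ i).Nonempty)
    (v : Fin k → ℝ) :
    (fun p : Vdk d (k + 1) => ((p.1, p.2 0 • v + Fin.tail p.2) : Vdk d k)) '' cayleySlice Δ 1 =
      convexHull ℝ ((fun x => ((x, v) : Vdk d k)) '' Δ 0 ∪
        ⋃ i : Fin k, (fun x => ((x, Pi.single i 1) : Vdk d k)) '' Δ i.succ) := by
  rw [union_image_eq_iUnion_image_cayleyHeights, convexHull_iUnion_image_prodMk hconv hne]
  ext ⟨x, y⟩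
  simp only [mem_image, mem_cayleySlice, sum_smul_cayleyHeights, mem_ofPred_eq, Prod.ext_iff]
  constructor
  · rintro ⟨q, ⟨⟨hq, hx⟩, hsum⟩, rfl, rfl⟩
    exact ⟨q.2, ⟨hq, hsum⟩, hx, rfl⟩
  · rintro ⟨t, ht, hx, rfl⟩
    exact ⟨(x, t), ⟨⟨ht.1, hx⟩, ht.2⟩, rfl, rfl⟩

theorem image_cayleySlice (hconv : ∀ i, Convex ℝ (Δ i)) (hne : ∀ i, (Δ i).Nonempty)
    (v : Fin k → ℝ) {c : ℝ} (hc : 0 < c) :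
    (fun p : Vdk d (k + 1) => ((p.1, p.2 0 • v + Fin.tail p.2) : Vdk d k)) '' cayleySlice Δ c =
      c • convexHull ℝ ((fun x => ((x, v) : Vdk d k)) '' Δ 0 ∪
        ⋃ i : Fin k, (fun x => ((x, Pi.single i 1) : Vdk d k)) '' Δ i.succ) := by
  have hlin (p : Vdk d (k + 1)) :
      ((c • p).1, (c • p).2 0 • v + Fin.tail (c • p).2) = c • (p.1, p.2 0 • v + Fin.tail p.2) := by
    ext <;> simp [Fin.tail, smul_add, smul_smul]
  rw [← image_cayleySlice_one hconv hne, ← image_smul_comm _ _ _ hlin, ← cayleySlice_mul hc,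
    mul_one]

theorem bijOn_sub_cayleySlice (hconv : ∀ i, Convex ℝ (Δ i)) (hne : ∀ i, (Δ i).Nonempty) :
    BijOn (fun p : Vdk d (k + 1) => ((p.1, Fin.tail p.2) : Vdk d k))
      ((· - ((0 : Fin d → ℝ), fun _ => 1)) '' cayleySlice Δ (k + 1))
      ((· - ((0 : Fin d → ℝ), fun _ => 1)) '' (((k : ℝ) + 1) •
        convexHull ℝ ((fun x => ((x, 0) : Vdk d k)) '' Δ 0 ∪
          ⋃ i : Fin k, (fun x => ((x, Pi.single i 1) : Vdk d k)) '' Δ i.succ))) := by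
  have hinj : InjOn (fun p : Vdk d (k + 1) => ((p.1, Fin.tail p.2) : Vdk d k))
      ((· - ((0 : Fin d → ℝ), fun _ => 1)) '' cayleySlice Δ (k + 1)) := by
    rintro _ ⟨x, hx, rfl⟩ _ ⟨y, hy, rfl⟩ hxy
    obtain ⟨hfst, htail⟩ := Prod.ext_iff.mp hxy
    refine Prod.ext hfst (Fin.eq_of_sum_eq_of_tail_eq ?_ htail)
    simp [Finset.sum_sub_distrib, (mem_cayleySlice.mp hx).2, (mem_cayleySlice.mp hy).2]
  convert hinj.bijOn_image using 1
  rw [← image_cayleySlice hconv hne 0 (by positivity), image_image, image_image]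
  refine image_congr fun p _ => ?_
  ext <;> simp [Fin.tail]

end Cayley

/-- description of the reflexive polytope `σ̄_{(k+1)} − m_{σ̄∨}` and of the
slice `π(σ̄_{(1)})` for the Cayley cone `σ̄`. -/
theorem cayley_slices {d k : ℕ}
    (Δ : Fin (k+1) → Set (Fin d → ℝ))
    (hlat : ∀ i, IsLatticePolytope (Δ i))
    (hrefl : IsReflexive (∑ i, Δ i))
    -- distinguished points n_σ̄ = r₀* + ⋯ + r_k* and m_σ̄∨ = r₀ + ⋯ + r_k
    (nbar mbar : Vdk d (k+1))
    (hn : nbar = ((0 : Fin d → ℝ), fun _ => 1))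
    (hm : mbar = ((0 : Fin d → ℝ), fun _ => 1))
    -- Δ̂₀ = Conv(Δ₀, Δ₁ + e₁, …, Δ_k + e_k) ⊆ ℝ^d ⊕ ℝ^k
    (Q : Set (Vdk d k))
    (hQ : Q = convexHull ℝ ((fun x => ((x, 0) : Vdk d k)) '' Δ 0 ∪
        ⋃ i : Fin k, (fun x => ((x, Pi.single i 1) : Vdk d k)) '' Δ i.succ)) :
    -- (i) (m, α₀, …, α_k) ↦ (m, α₁, …, α_k) maps σ̄_{(k+1)} − m_σ̄∨ bijectively onto
    --     (k+1)·Conv(Δ₀, Δ₁+e₁, …, Δ_k+e_k) − (e₁ + ⋯ + e_k)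
    Set.BijOn (fun p : Vdk d (k+1) => ((p.1, fun i => p.2 i.succ) : Vdk d k))
      ((fun x => x - mbar) '' {x ∈ cayleyCone Δ | pairingV x nbar = (k : ℝ) + 1})
      ((fun y => y - (((0 : Fin d → ℝ), fun _ => 1) : Vdk d k)) '' (((k : ℝ) + 1) • Q)) ∧
    -- (ii) π(σ̄_{(1)}) = Conv(Δ₀ − (e₁+⋯+e_k), Δ₁ + e₁, …, Δ_k + e_k)
    (fun p : Vdk d (k+1) => ((p.1, fun i => p.2 i.succ - p.2 0) : Vdk d k)) ''
        {x ∈ cayleyCone Δ | pairingV x nbar = 1} =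
      convexHull ℝ ((fun x => ((x, fun _ => -1) : Vdk d k)) '' Δ 0 ∪
        ⋃ i : Fin k, (fun x => ((x, Pi.single i 1) : Vdk d k)) '' Δ i.succ) := by
  subst hn hm hQ
  have hconv i := (hlat i).convex
  have hne := Set.Nonempty.of_fintype_sum ⟨0, interior_subset hrefl.2.1⟩
  refine ⟨bijOn_sub_cayleySlice hconv hne, ?_⟩
  convert image_cayleySlice_one hconv hne (fun _ => -1) using 2
  · ext p i
    · rfl
    · simp only [Pi.add_apply, Pi.smul_apply, Fin.tail, smul_eq_mul]
      ring
  · rfl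
end
end
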